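/- arXiv:1507.00810 — 5 statements merged into one kernel-verified Lean document; each statement's English description precedes it below -/
import Mathlib

section
/- There do not exist real numbers γ₀, γ₁ such that for all n ≥ 1 and all x ∈ (0, π), T_n(x) ≥ γ₀ + γ₁ x > 0, where T_n(x) = Σ_{k=0}^n b_k cos(kx) with b_{2k} = b_{2k+1} = C(2k,k)/4^k. -/
open Real Finset

noncomputable def b (k : ℕ) : ℝ := (Nat.choose (2*(k/2)) (k/2) : ℝ) / 4^(k/2)

noncomputable def T (n : ℕ) (x : ℝ) : ℝ := ∑ k ∈ Finset.range (n+1), b k * Real.cos (k * x)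

/-!
Already `T 1 x = 1 + cos x` defeats every candidate: it vanishes to second order at `π`, since
`1 + cos (π - t) ≤ t² / 2`. Letting `t ↓ 0` in `0 < γ₀ + γ₁ (π - t) ≤ t² / 2` forces the linear
function to vanish at `π`, and then its slope `-γ₁ > 0` would satisfy `-γ₁ ≤ t / 2` for all small `t`.
-/

open Filter Topology

theorem T_one (x : ℝ) : T 1 x = 1 + cos x := by
  simp [T, b, sum_range_succ]

theorem one_add_cos_pi_sub_le (t : ℝ) : 1 + cos (π - t) ≤ t ^ 2 / 2 := by
  rw [cos_pi_sub]
  linarith [one_sub_sq_div_two_le_cos (x := t)]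

theorem not_eventually_pos_affine_le_mul_sq (a c K : ℝ) :
    ¬ ∀ᶠ t in 𝓝[>] (0 : ℝ), 0 < a + c * t ∧ a + c * t ≤ K * t ^ 2 := by
  intro h
  have h_affine : Tendsto (fun t => a + c * t) (𝓝[>] 0) (𝓝 a) :=
    ((show Continuous fun t : ℝ => a + c * t by fun_prop).tendsto' 0 a (by simp)).mono_left
      nhdsWithin_le_nhds
  have h_quad : Tendsto (fun t : ℝ => K * t ^ 2) (𝓝[>] 0) (𝓝 0) :=
    ((show Continuous fun t : ℝ => K * t ^ 2 by fun_prop).tendsto' 0 0 (by simp)).mono_left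
      nhdsWithin_le_nhds
  have ha_nonneg : 0 ≤ a := ge_of_tendsto h_affine (h.mono fun _ ht => ht.1.le)
  have ha_nonpos : a ≤ 0 := le_of_tendsto_of_tendsto h_affine h_quad (h.mono fun _ ht => ht.2)
  obtain rfl : a = 0 := le_antisymm ha_nonpos ha_nonneg
  have h_slope : ∀ᶠ t in 𝓝[>] (0 : ℝ), 0 < c ∧ c ≤ K * t := by
    filter_upwards [h, self_mem_nhdsWithin] with t ⟨hpos, hle⟩ (ht : 0 < t)
    rw [zero_add] at hpos hle
    exact ⟨pos_of_mul_pos_left hpos ht.le, le_of_mul_le_mul_right (by nlinarith) ht⟩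
  have h_lin : Tendsto (fun t : ℝ => K * t) (𝓝[>] 0) (𝓝 0) :=
    ((show Continuous fun t : ℝ => K * t by fun_prop).tendsto' 0 0 (by simp)).mono_left
      nhdsWithin_le_nhds
  obtain ⟨_, hc_pos, _⟩ := h_slope.exists
  exact hc_pos.not_ge (ge_of_tendsto h_lin (h_slope.mono fun _ ht => ht.2))

theorem stmt_2 : ¬ ∃ γ₀ γ₁ : ℝ, ∀ n : ℕ, 1 ≤ n → ∀ x ∈ Set.Ioo 0 Real.pi,
    γ₀ + γ₁ * x ≤ T n x ∧ 0 < γ₀ + γ₁ * x := by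
  rintro ⟨γ₀, γ₁, h⟩
  apply not_eventually_pos_affine_le_mul_sq (γ₀ + γ₁ * π) (-γ₁) (1 / 2)
  filter_upwards [Ioo_mem_nhdsGT pi_pos] with t ⟨ht_pos, ht_lt⟩
  obtain ⟨h_le, h_pos⟩ := h 1 le_rfl (π - t) ⟨by linarith, by linarith⟩
  have h_bound := one_add_cos_pi_sub_le t
  rw [T_one] at h_le
  constructor <;> linarith
end

section
/- For n ≥ 2 and x ∈ (0, π), T_n(x) ≥ 1 + cos(x) − (1 + sin(3x/2))/(4 sin(x/2)), where T_n(x) = Σ_{k=0}^n b_k cos(kx) with b_{2k} = b_{2k+1} = C(2k,k)/4^k. -/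
open Real Finset

/-!
Multiplying by `2 sin (x/2)` turns `T n x - 1 - cos x = ∑_{k=2}^n b k cos (k x)` into
`∑ b k (s (k+1) - s k)` with `s k = sin ((2k-1)x/2)`. Since `b` is antitone and `s ≥ -1`,
summation by parts bounds this from below by `-b 2 (1 + s 2) = -(1 + sin (3x/2))/2`.
-/

theorem Nat.centralBinom_succ_le_four_mul (j : ℕ) :
    Nat.centralBinom (j + 1) ≤ 4 * Nat.centralBinom j := by
  refine Nat.le_of_mul_le_mul_left ?_ j.succ_pos
  rw [Nat.succ_mul_centralBinom_succ]
  nlinarith [Nat.centralBinom_pos j]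

theorem antitone_centralBinom_div_four_pow :
    Antitone fun j : ℕ => (Nat.centralBinom j : ℝ) / 4 ^ j := by
  refine antitone_nat_of_succ_le fun j => ?_
  have h : (Nat.centralBinom (j + 1) : ℝ) ≤ 4 * Nat.centralBinom j := by
    exact_mod_cast Nat.centralBinom_succ_le_four_mul j
  rw [pow_succ, div_le_div_iff₀ (by positivity) (by positivity)]
  nlinarith [pow_pos (four_pos : (0 : ℝ) < 4) j]

theorem Antitone.sub_le_sum_Ico_mul_sub {a s : ℕ → ℝ} (ha : Antitone a) (hs : ∀ k, -1 ≤ s k)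
    {m n : ℕ} (hmn : m ≤ n) :
    a n * (1 + s n) - a m * (1 + s m) ≤ ∑ k ∈ Ico m n, a k * (s (k + 1) - s k) := by
  induction n, hmn using Nat.le_induction with
  | base => simp
  | succ n hmn ih =>
    rw [sum_Ico_succ_top hmn]
    nlinarith [mul_le_mul_of_nonneg_right (ha n.le_succ) (by linarith [hs (n + 1)] :
      0 ≤ 1 + s (n + 1))]

theorem b_eq (k : ℕ) : b k = (Nat.centralBinom (k / 2) : ℝ) / 4 ^ (k / 2) := by
  rw [b, Nat.centralBinom_eq_two_mul_choose]

theorem b_antitone : Antitone b := fun _ _ h => by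
  simpa only [b_eq] using antitone_centralBinom_div_four_pow (Nat.div_le_div_right h)

theorem b_nonneg (k : ℕ) : 0 ≤ b k := by
  unfold b; positivity

theorem b_two : b 2 = 1 / 2 := by
  norm_num [b]

theorem T_sub_one_sub_cos {n : ℕ} (hn : 1 ≤ n) (x : ℝ) :
    T n x - 1 - cos x = ∑ k ∈ Ico 2 (n + 1), b k * cos (k * x) := by
  rw [T, ← sum_range_add_sum_Ico _ (by omega : 2 ≤ n + 1)]
  norm_num [sum_range_succ, b]
  ring

theorem two_mul_sin_half_mul_cos (x a : ℝ) :
    2 * sin (x / 2) * cos (a * x) =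
      sin ((2 * (a + 1) - 1) * x / 2) - sin ((2 * a - 1) * x / 2) := by
  rw [sin_sub_sin]
  ring_nf

theorem stmt_5 : ∀ n : ℕ, 2 ≤ n → ∀ x ∈ Set.Ioo 0 Real.pi,
    1 + Real.cos x - (1 + Real.sin (3*x/2)) / (4 * Real.sin (x/2)) ≤ T n x := by
  intro n hn x ⟨hx0, hxπ⟩
  have hsin : 0 < sin (x / 2) := sin_pos_of_pos_of_lt_pi (by linarith) (by linarith)
  set s : ℕ → ℝ := fun k => sin ((2 * k - 1) * x / 2)
  have hsum : 2 * sin (x / 2) * (T n x - 1 - cos x) =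
      ∑ k ∈ Ico 2 (n + 1), b k * (s (k + 1) - s k) := by
    rw [T_sub_one_sub_cos (by omega), mul_sum]
    refine sum_congr rfl fun k _ => ?_
    simp only [s, Nat.cast_succ, ← two_mul_sin_half_mul_cos]
    ring
  have hbound := b_antitone.sub_le_sum_Ico_mul_sub (s := s) (fun _ => neg_one_le_sin _)
    (by omega : 2 ≤ n + 1)
  have hs2 : s 2 = sin (3 * x / 2) := by norm_num [s]
  rw [← hsum, hs2, b_two] at hbound
  have hbn : 0 ≤ b (n + 1) * (1 + s (n + 1)) :=
    mul_nonneg (b_nonneg _) (by linarith [show -1 ≤ s (n + 1) from neg_one_le_sin _])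
  have key : -(1 + sin (3 * x / 2)) ≤ 4 * sin (x / 2) * (T n x - 1 - cos x) := by linarith
  rw [sub_le_comm, le_div_iff₀ (by linarith)]
  linarith
end

section
/- For all x with 3π/8 ≤ x < π, one has (123/1000)(π − x)^2 < 1 + cos(x) − (1 + sin(3x/2))/(4 sin(x/2)). -/
/-!
Put `y = (π - x) / 2 ∈ (0, 5π/16]` and `c = cos y = sin (x / 2)`. The double- and triple-angle
formulas turn the right-hand side into `(5c - 4c³ - 1) / (4c)`, so the claim is
`0 < 5c - 4c³ - 1 - (123/1000) · 16 y² c`. For `y² ≤ 97/100` and `c ≥ 1 - y²/2` this cubic in `c`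
is decreasing, so it suffices to check it at the Taylor upper bound `c = 1 - y²/2 + (5/96) y⁴`,
where it becomes a polynomial inequality in `y²`.
-/

open Real

lemma one_add_cos_sub_div_eq (x : ℝ) (h : sin (x / 2) ≠ 0) :
    1 + cos x - (1 + sin (3 * x / 2)) / (4 * sin (x / 2)) =
      (5 * sin (x / 2) - 4 * sin (x / 2) ^ 3 - 1) / (4 * sin (x / 2)) := by
  have hcos : cos x = 1 - 2 * sin (x / 2) ^ 2 := by
    rw [← cos_two_mul_eq_one_sub, mul_div_cancel₀ x two_ne_zero]
  rw [hcos, show 3 * x / 2 = 3 * (x / 2) by ring, sin_three_mul]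
  field_simp
  ring

noncomputable def margin (z c : ℝ) : ℝ := 5 * c - 4 * c ^ 3 - 1 - 123 / 1000 * (4 * z) * (4 * c)

lemma margin_antitone (z c d : ℝ) (hz : z ≤ 97 / 100) (hc : 1 - z / 2 ≤ c) (hcd : c ≤ d) :
    margin z d ≤ margin z c := by
  have hc0 : 0 < c := by linarith
  have hderiv : 5 ≤ 4 * (c ^ 2 + c * d + d ^ 2) + 123 / 1000 * 16 * z := by
    nlinarith [mul_le_mul hc hcd (by linarith) hc0.le, mul_le_mul hc hc (by linarith) hc0.le]
  unfold margin
  nlinarith [mul_le_mul_of_nonneg_left hderiv (sub_nonneg.2 hcd)]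

lemma margin_pos_at_cos_upper (z : ℝ) (hz0 : 0 < z) (hz : z ≤ 97 / 100) :
    0 < margin z (1 - z / 2 + z ^ 2 * (5 / 96)) := by
  unfold margin
  nlinarith [mul_pos hz0 hz0, mul_pos (mul_pos hz0 hz0) hz0,
    mul_pos (mul_pos hz0 hz0) (mul_pos hz0 hz0),
    mul_nonneg (mul_nonneg hz0.le hz0.le) (by linarith : (0 : ℝ) ≤ 97 / 100 - z),
    mul_nonneg hz0.le (by linarith : (0 : ℝ) ≤ 97 / 100 - z)]

lemma margin_pos (z c : ℝ) (hz0 : 0 < z) (hz : z ≤ 97 / 100) (hlo : 1 - z / 2 ≤ c)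
    (hhi : c ≤ 1 - z / 2 + z ^ 2 * (5 / 96)) : 0 < margin z c :=
  (margin_pos_at_cos_upper z hz0 hz).trans_le (margin_antitone z c _ hz hlo hhi)

lemma cos_le_one_sub_sq_div_two_add (y : ℝ) (hy : |y| ≤ 1) :
    cos y ≤ 1 - y ^ 2 / 2 + y ^ 4 * (5 / 96) := by
  have h := (abs_le.1 (cos_bound hy)).2
  rw [(by decide : Even 4).pow_abs] at h
  linarith

theorem stmt_6 : ∀ x ∈ Set.Ico (3*Real.pi/8) Real.pi,
    (123/1000) * (Real.pi - x)^2 <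
      1 + Real.cos x - (1 + Real.sin (3*x/2)) / (4 * Real.sin (x/2)) := by
  rintro x ⟨hx₁, hx₂⟩
  set y := π / 2 - x / 2 with hy
  have hsin : sin (x / 2) = cos y := by rw [hy, cos_pi_div_two_sub]
  have hy0 : 0 < y := by linarith
  have hy1 : y ≤ 63 / 64 := by linarith [pi_lt_d2]
  have hcos_pos : 0 < cos y := cos_pos_of_mem_Ioo ⟨by linarith, by linarith [pi_gt_three]⟩
  have hcos_le : cos y ≤ 1 - y ^ 2 / 2 + (y ^ 2) ^ 2 * (5 / 96) := by
    rw [← pow_mul]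
    exact cos_le_one_sub_sq_div_two_add y (by rw [abs_of_pos hy0]; linarith)
  rw [one_add_cos_sub_div_eq x (hsin ▸ hcos_pos.ne'), hsin, lt_div_iff₀ (by positivity),
    show (π - x) ^ 2 = 4 * y ^ 2 by ring, ← sub_pos]
  exact margin_pos (y ^ 2) (cos y) (by positivity) (by nlinarith) one_sub_sq_div_two_le_cos hcos_le
end

section
/- For all n ≥ 0 and x ∈ [5π/8, 2.68], the alternating sum H_n(x) = Σ_{k=0}^n (−1)^k cos(kx) satisfies H_n(x) ≥ 1/2 − 1/(2 cos(1.34)) > −(0.29 · 4^{11})/C(22,11). -/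
open Real Finset

/-
Multiplying by 2 cos(x/2) telescopes the alternating cosine sum:
2 cos(x/2) H_n(x) = cos(x/2) + (-1)^n cos((n + 1/2) x). As the last term is at least -1,
H_n(x) ≥ 1/2 - 1/(2 cos(x/2)) whenever cos(x/2) > 0, and on the given interval
x/2 ≤ 1.34 < π/2. The numerical inequality needs cos 1.34 > 0.2248, and
cos 1.34 = sin(π/2 - 1.34) > 0.227 by the cubic Taylor bound for sine.
-/

noncomputable def H (n : ℕ) (x : ℝ) : ℝ :=
  ∑ k ∈ Finset.range (n+1), (-1)^k * Real.cos (k * x)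

lemma H_succ (n : ℕ) (x : ℝ) :
    H (n + 1) x = H n x + (-1) ^ (n + 1) * cos ((n + 1) * x) := by
  simp only [H, sum_range_succ]
  push_cast
  ring

lemma two_mul_cos_half_mul_H (n : ℕ) (x : ℝ) :
    2 * cos (x / 2) * H n x = cos (x / 2) + (-1) ^ n * cos ((n + 1 / 2) * x) := by
  induction n with
  | zero => simp [H]; ring_nf
  | succ n ih =>
    rw [show ((n : ℝ) + 1 / 2) * x = (n + 1) * x - x / 2 by ring, cos_sub] at ih
    rw [H_succ, Nat.cast_succ, show ((n : ℝ) + 1 + 1 / 2) * x = (n + 1) * x + x / 2 by ring,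
      cos_add]
    linear_combination ih

lemma H_ge_of_le_cos_half {n : ℕ} {x c : ℝ} (hc : 0 < c) (hcx : c ≤ cos (x / 2)) :
    1 / 2 - 1 / (2 * c) ≤ H n x := by
  have hpos : 0 < cos (x / 2) := hc.trans_le hcx
  have htail : -1 ≤ (-1 : ℝ) ^ n * cos ((n + 1 / 2) * x) := by
    rcases neg_one_pow_eq_or ℝ n with h | h <;> rw [h]
    · simpa using neg_one_le_cos _
    · simpa using cos_le_one _
  calc 1 / 2 - 1 / (2 * c) ≤ 1 / 2 - 1 / (2 * cos (x / 2)) := by gcongr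
    _ = (cos (x / 2) - 1) / (2 * cos (x / 2)) := by field_simp
    _ ≤ H n x := by
      rw [div_le_iff₀ (by positivity), mul_comm, two_mul_cos_half_mul_H]
      linarith

lemma cos_1_34_gt : (0.227 : ℝ) < cos 1.34 := by
  have hπ := pi_gt_d4
  have hπ' := pi_lt_d2
  set y := π / 2 - 1.34 with hy
  have hy0 : 0.23 < y := by rw [hy]; linarith
  have hy1 : y < 0.24 := by rw [hy]; linarith
  rw [show (1.34 : ℝ) = π / 2 - y by rw [hy]; ring, cos_pi_div_two_sub]
  nlinarith [sin_gt_sub_cube (by linarith : 0 < y), pow_le_pow_left₀ (by linarith) hy1.le 3]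

theorem stmt_13 : ∀ n : ℕ, ∀ x ∈ Set.Icc (5*Real.pi/8) 2.68,
    1/2 - 1/(2 * Real.cos 1.34) ≤ H n x ∧
      -(0.29 * 4^11) / (Nat.choose 22 11 : ℝ) < 1/2 - 1/(2 * Real.cos 1.34) := by
  intro n x ⟨hx₁, hx₂⟩
  have hc := cos_1_34_gt
  have hcx : cos 1.34 ≤ cos (x / 2) :=
    cos_le_cos_of_nonneg_of_le_pi (by linarith [pi_pos]) (by linarith [pi_gt_three])
      (by norm_num at hx₂ ⊢; linarith)
  refine ⟨H_ge_of_le_cos_half (by linarith) hcx, ?_⟩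
  have hinv : 1 / (2 * cos 1.34) < 1 / (2 * 0.227) := by gcongr
  rw [show (Nat.choose 22 11 : ℝ) = 705432 by norm_num [Nat.choose]]
  norm_num at hinv ⊢
  linarith
end

section
/- Let n ≥ 22 and D_n(x) = b_{22} Σ_{k=0}^{22} (−1)^k cos(kx) + Σ_{k=23}^n (−1)^k b_k cos(kx), with b_{2k} = b_{2k+1} = C(2k,k)/4^k. Then D_n(x) ≥ −0.29 for all x ∈ [5π/8, 2.68]. -/
open Real Finset

noncomputable def D (n : ℕ) (x : ℝ) : ℝ :=
  b 22 * (∑ k ∈ Finset.range 23, (-1)^k * Real.cos (k * x))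
    + ∑ k ∈ Finset.Icc 23 n, (-1)^k * b k * Real.cos (k * x)

/-! With `θ = x + π`, `D n x = ∑ c_k cos (k θ)` for the nonnegative, nonincreasing coefficients
`c_k = b (max k 22)`. By Abel summation such a sum is at least `c_0` times any lower bound of the
partial sums `∑_{k<N} cos (k θ)`, and the Dirichlet kernel gives the lower bound `(s - 1) / (2 s)`
with `s = sin (θ / 2) = cos (x / 2)`. On the interval `cos (x / 2) ≥ 0.2275`, which makes
`b 22 (s - 1) / (2 s) ≥ -0.29`. -/

theorem le_sum_range_mul_of_antitone {c g : ℕ → ℝ} {L : ℝ} (hc : Antitone c)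
    (hc₀ : ∀ k, 0 ≤ c k) (hg : ∀ N, L ≤ ∑ k ∈ range N, g k) (n : ℕ) :
    c 0 * L ≤ ∑ k ∈ range n, c k * g k := by
  -- summation by parts, as an invariant
  have key : ∀ m, c 0 * L + c m * ((∑ k ∈ range m, g k) - L) ≤ ∑ k ∈ range m, c k * g k := by
    intro m
    induction m with
    | zero => simp
    | succ m ih =>
      have hstep := mul_le_mul_of_nonneg_right (hc m.le_succ) (sub_nonneg.mpr (hg (m + 1)))
      rw [sum_range_succ] at hstep
      rw [sum_range_succ, sum_range_succ]
      nlinarith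
  nlinarith [key n, mul_nonneg (hc₀ n) (sub_nonneg.mpr (hg n))]

theorem two_mul_sin_half_mul_sum_range_cos (θ : ℝ) (N : ℕ) :
    2 * sin (θ / 2) * ∑ k ∈ range N, cos (k * θ) = sin ((N - 1 / 2) * θ) + sin (θ / 2) := by
  induction N with
  | zero =>
    rw [sum_range_zero, Nat.cast_zero, show ((0 : ℝ) - 1 / 2) * θ = -(θ / 2) by ring, sin_neg]
    ring
  | succ N ih =>
    have telescope : sin ((N + 1 - 1 / 2) * θ) - sin ((N - 1 / 2) * θ)
        = 2 * sin (θ / 2) * cos (N * θ) := by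
      rw [sin_sub_sin]; ring_nf
    rw [sum_range_succ, mul_add, ih]
    push_cast
    linarith

theorem sum_range_cos_mul_ge {θ : ℝ} (hθ : 0 < sin (θ / 2)) (N : ℕ) :
    (sin (θ / 2) - 1) / (2 * sin (θ / 2)) ≤ ∑ k ∈ range N, cos (k * θ) := by
  rw [div_le_iff₀ (by positivity)]
  nlinarith [two_mul_sin_half_mul_sum_range_cos θ N, neg_one_le_sin ((N - 1 / 2) * θ)]

theorem cos_nat_mul_add_pi (k : ℕ) (x : ℝ) : cos (k * (x + π)) = (-1) ^ k * cos (k * x) := by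
  rw [show (k : ℝ) * (x + π) = k * π - -(k * x) by ring, cos_nat_mul_pi_sub, cos_neg]

theorem sum_range_neg_one_pow_mul_cos_ge {x : ℝ} (hx : 0 < cos (x / 2)) (N : ℕ) :
    (cos (x / 2) - 1) / (2 * cos (x / 2)) ≤ ∑ k ∈ range N, (-1) ^ k * cos (k * x) := by
  have hsin : sin ((x + π) / 2) = cos (x / 2) := by
    rw [add_div, sin_add_pi_div_two]
  have h := sum_range_cos_mul_ge (θ := x + π) (by rwa [hsin]) N
  rw [hsin] at h
  simpa only [cos_nat_mul_add_pi] using h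

theorem b_22 : b 22 = 705432 / 4194304 := by
  rw [b, show Nat.choose 22 11 = 705432 by decide]
  norm_num

theorem D_eq_sum_range (n : ℕ) (hn : 22 ≤ n) (x : ℝ) :
    D n x = ∑ k ∈ range (n + 1), b (max k 22) * ((-1) ^ k * cos (k * x)) := by
  rw [D, mul_sum, ← Ico_add_one_right_eq_Icc, ← sum_range_add_sum_Ico _ (by omega : 23 ≤ n + 1)]
  refine congrArg₂ (· + ·) (sum_congr rfl fun k hk => ?_) (sum_congr rfl fun k hk => ?_)
  · rw [max_eq_right (by simp at hk; omega)]
  · rw [max_eq_left (by simp at hk; omega)]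
    ring

theorem D_ge (n : ℕ) (hn : 22 ≤ n) {x : ℝ} (hx : 0 < cos (x / 2)) :
    b 22 * ((cos (x / 2) - 1) / (2 * cos (x / 2))) ≤ D n x := by
  rw [D_eq_sum_range n hn]
  exact le_sum_range_mul_of_antitone (b_antitone.comp_monotone fun _ _ h => max_le_max_right 22 h)
    (fun k => b_nonneg _) (sum_range_neg_one_pow_mul_cos_ge hx) (n + 1)

theorem cos_half_ge {x : ℝ} (hx : x ∈ Set.Icc (5 * π / 8) 2.68) : 0.2275 ≤ cos (x / 2) := by
  obtain ⟨hx₁, hx₂⟩ := hx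
  have hπ := pi_gt_d2
  have hπ' := pi_lt_d2
  set y := π / 2 - x / 2 with hy
  have hy₀ : 0.23 ≤ y := by linarith
  have hy₁ : y ≤ 0.6 := by linarith
  rw [← sin_pi_div_two_sub, ← hy]
  nlinarith [sin_gt_sub_cube (by linarith : 0 < y),
    mul_nonneg (sub_nonneg.mpr hy₀) (by nlinarith : (0 : ℝ) ≤ 6 - y ^ 2 - 0.23 * y - 0.0529)]

theorem stmt_14 (n : ℕ) (hn : 22 ≤ n) :
    ∀ x ∈ Set.Icc (5*Real.pi/8) 2.68, D n x ≥ -0.29 := by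
  intro x hx
  have hcos := cos_half_ge hx
  refine le_trans ?_ (D_ge n hn (by linarith))
  rw [b_22, mul_div_assoc', le_div_iff₀ (by linarith)]
  linarith
end
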